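/- arXiv:1810.08448 — 4 statements merged into one kernel-verified Lean document; each statement's English description precedes it below -/
import Mathlib

section
/- For every integer k ≥ 0 and every natural number n ≥ 1, the absolute value of the generalized binomial coefficient C(-n/2, k) = (-n/2)(-n/2-1)···(-n/2-k+1)/k! is at most (n+k+1)^(n+1). -/
lemma ascFac_prod (n k : ℕ) : ((Nat.ascFactorial n k : ℕ) : ℝ) = ∏ j ∈ Finset.range k, ((n:ℝ) + j) := by
  induction k with
  | zero => simp
  | succ k ih => rw [Nat.ascFactorial_succ, Finset.prod_range_succ, ← ih]; push_cast; ring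

/-- For every `k : ℕ` and `n ≥ 1`, the generalized binomial coefficient
`C(-n/2, k) = (-n/2)(-n/2-1)⋯(-n/2-k+1)/k!` satisfies `|C(-n/2,k)| ≤ (n+k+1)^(n+1)`. -/
theorem stmt0 (k n : ℕ) (hn : 1 ≤ n) :
    |(∏ j ∈ Finset.range k, (-(n : ℝ) / 2 - j)) / (Nat.factorial k)| ≤
      ((n : ℝ) + k + 1) ^ (n + 1) := by
  have hfac : (0:ℝ) < (Nat.factorial k : ℝ) := by positivity
  rw [abs_div, abs_of_pos hfac, div_le_iff₀ hfac, Finset.abs_prod]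
  have hprodnn : (0:ℝ) ≤ ∏ j ∈ Finset.range k, |(-(n : ℝ) / 2 - (j:ℝ))| :=
    Finset.prod_nonneg fun i _ => abs_nonneg _
  have h1 : (∏ j ∈ Finset.range k, |(-(n : ℝ) / 2 - j)|) ≤ (Nat.ascFactorial n k : ℝ) := by
    rw [ascFac_prod]
    apply Finset.prod_le_prod
    · intro i _; positivity
    · intro i _
      have hi : (0:ℝ) ≤ (i:ℝ) := by positivity
      have hn' : (1:ℝ) ≤ (n:ℝ) := by exact_mod_cast hn
      rw [abs_of_nonpos (by nlinarith)]
      nlinarith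
  have h2 : (Nat.ascFactorial n k : ℝ) ≤ ((n:ℝ) + k + 1) ^ (n+1) * (Nat.factorial k : ℝ) := by
    rw [Nat.ascFactorial_eq_factorial_mul_choose']
    have hsymm : (n + k - 1).choose k = (n + k - 1).choose (n - 1) := by
      have h : k ≤ n + k - 1 := by omega
      have h2 := Nat.choose_symm h
      rw [show n + k - 1 - k = n - 1 by omega] at h2
      omega
    have hb : ((n + k - 1).choose k : ℝ) ≤ ((n:ℝ) + k + 1) ^ (n+1) := by
      rw [hsymm]
      calc ((n + k - 1).choose (n-1) : ℝ) ≤ ((n + k - 1 : ℕ) : ℝ) ^ (n-1) := by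
            exact_mod_cast Nat.choose_le_pow _ _
        _ ≤ ((n:ℝ) + k + 1) ^ (n-1) := by
            apply pow_le_pow_left₀ (by positivity)
            have : ((n + k - 1 : ℕ) : ℝ) ≤ ((n + k : ℕ) : ℝ) := by exact_mod_cast Nat.sub_le _ _
            push_cast at this ⊢; linarith
        _ ≤ ((n:ℝ) + k + 1) ^ (n+1) := by
            have h1 : (1:ℝ) ≤ (n:ℝ) + k + 1 := by
              have := Nat.cast_nonneg (α := ℝ) n; have := Nat.cast_nonneg (α := ℝ) k; linarith
            exact pow_le_pow_right₀ h1 (by omega)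
    have hcp : (0:ℝ) ≤ ((n + k - 1).choose k : ℝ) := by positivity
    push_cast
    nlinarith [hb, hfac, hcp]
  linarith
end

section
/- Let n ≥ 1, s > 0, ε ∈ (0, min{n, 2s}), and G_s(x,y) = k(n,s) |x-y|^{2s-n} ∫₀^{r₀(x,y)} η^{s-1}/(η+1)^{n/2} dη with r₀(x,y) = (1-|x|²)(1-|y|²)/|x-y|² for x, y ∈ B₁. Then G_s(x,y) ≤ C d(x)^{s-ε/2} d(y)^{s-ε/2} / |x-y|^{n-ε} for all x, y ∈ B₁, where d(x) = 1 - |x| and C depends only on n, s, ε. -/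
open MeasureTheory

/-- Bound on the polyharmonic Green function of the unit ball:
`G_s(x,y) ≤ C d(x)^{s-ε/2} d(y)^{s-ε/2} / |x-y|^{n-ε}` with `d(x) = 1 - |x|`. -/
theorem stmt8 (n : ℕ) (hn : 1 ≤ n) (s : ℝ) (hs : 0 < s)
    (ε : ℝ) (hε : 0 < ε) (hε2 : ε < min (n : ℝ) (2 * s)) :
    ∃ C : ℝ, 0 < C ∧ ∀ x y : EuclideanSpace ℝ (Fin n), ‖x‖ < 1 → ‖y‖ < 1 → x ≠ y →
      (Real.Gamma ((n : ℝ) / 2) / (Real.pi ^ ((n : ℝ) / 2) * 4 ^ s * Real.Gamma s ^ 2)) *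
          ‖x - y‖ ^ (2 * s - (n : ℝ)) *
          ∫ η in (0:ℝ)..((1 - ‖x‖ ^ 2) * (1 - ‖y‖ ^ 2) / ‖x - y‖ ^ 2),
            η ^ (s - 1) / (η + 1) ^ ((n : ℝ) / 2)
        ≤ C * (1 - ‖x‖) ^ (s - ε / 2) * (1 - ‖y‖) ^ (s - ε / 2) /
            ‖x - y‖ ^ ((n : ℝ) - ε) := by
  have hεn : ε < (n : ℝ) := lt_of_lt_of_le hε2 (min_le_left _ _)
  have hε2s : ε < 2 * s := lt_of_lt_of_le hε2 (min_le_right _ _)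
  set σ : ℝ := s - ε / 2 with hσdef
  have hσ : 0 < σ := by simp only [hσdef]; linarith
  set k : ℝ := Real.Gamma ((n : ℝ) / 2) / (Real.pi ^ ((n : ℝ) / 2) * 4 ^ s * Real.Gamma s ^ 2)
    with hkdef
  have hnpos : (0 : ℝ) < n := by exact_mod_cast hn
  have hkpos : 0 < k := by
    have h1 := Real.Gamma_pos_of_pos (show (0:ℝ) < (n:ℝ)/2 by linarith)
    have h2 := Real.Gamma_pos_of_pos hs
    have h3 : (0:ℝ) < Real.pi := Real.pi_pos
    rw [hkdef]
    positivity
  refine ⟨k / σ * 4 ^ σ, by positivity, ?_⟩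
  intro x y hx hy hxy
  set R : ℝ := ‖x - y‖ with hRdef
  have hR : 0 < R := norm_sub_pos_iff.mpr hxy
  have hx0 := norm_nonneg x
  have hy0 := norm_nonneg y
  have hdx : (0:ℝ) < 1 - ‖x‖ := by linarith
  have hdy : (0:ℝ) < 1 - ‖y‖ := by linarith
  have hrx : (0:ℝ) < 1 - ‖x‖ ^ 2 := by nlinarith
  have hry : (0:ℝ) < 1 - ‖y‖ ^ 2 := by nlinarith
  set T : ℝ := (1 - ‖x‖ ^ 2) * (1 - ‖y‖ ^ 2) / R ^ 2 with hTdef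
  have hT : 0 < T := by positivity
  -- the comparison function
  have hg_int : IntervalIntegrable (fun η : ℝ => η ^ (σ - 1)) volume 0 T :=
    intervalIntegral.intervalIntegrable_rpow' (by linarith)
  -- pointwise bound on (0, T]
  have hbound : ∀ η : ℝ, 0 < η → η ^ (s - 1) / (η + 1) ^ ((n : ℝ) / 2) ≤ η ^ (σ - 1) := by
    intro η hη
    have h1 : η ^ (ε / 2) ≤ (η + 1) ^ ((n : ℝ) / 2) := by
      calc η ^ (ε / 2) ≤ (η + 1) ^ (ε / 2) :=
            Real.rpow_le_rpow hη.le (by linarith) (by linarith)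
        _ ≤ (η + 1) ^ ((n : ℝ) / 2) :=
            Real.rpow_le_rpow_of_exponent_le (by linarith) (by linarith)
    have h2 : η ^ (s - 1) / (η + 1) ^ ((n : ℝ) / 2) ≤ η ^ (s - 1) / η ^ (ε / 2) :=
      div_le_div_of_nonneg_left (by positivity) (by positivity) h1
    calc η ^ (s - 1) / (η + 1) ^ ((n : ℝ) / 2) ≤ η ^ (s - 1) / η ^ (ε / 2) := h2
      _ = η ^ (s - 1 - ε / 2) := (Real.rpow_sub hη _ _).symm
      _ = η ^ (σ - 1) := by congr 1; rw [hσdef]; ring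
  -- integrability of the integrand
  have hf_meas : AEStronglyMeasurable (fun η : ℝ => η ^ (s - 1) / (η + 1) ^ ((n : ℝ) / 2))
      (volume.restrict (Set.uIoc 0 T)) := by
    apply Measurable.aestronglyMeasurable
    fun_prop
  have hf_int : IntervalIntegrable (fun η : ℝ => η ^ (s - 1) / (η + 1) ^ ((n : ℝ) / 2))
      volume 0 T := by
    apply hg_int.mono_fun' hf_meas
    rw [Set.uIoc_of_le hT.le]
    filter_upwards [MeasureTheory.ae_restrict_mem measurableSet_Ioc] with η hη
    have h0 : (0:ℝ) ≤ η ^ (s - 1) / (η + 1) ^ ((n : ℝ) / 2) := by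
      have hη1 : (0:ℝ) < η := hη.1
      have hη2 : (0:ℝ) < η + 1 := by linarith
      positivity
    rw [Real.norm_of_nonneg h0]
    exact hbound η hη.1
  -- the integral comparison
  have hI : (∫ η in (0:ℝ)..T, η ^ (s - 1) / (η + 1) ^ ((n : ℝ) / 2)) ≤ T ^ σ / σ := by
    have h1 : (∫ η in (0:ℝ)..T, η ^ (s - 1) / (η + 1) ^ ((n : ℝ) / 2))
        ≤ ∫ η in (0:ℝ)..T, η ^ (σ - 1) := by
      rw [intervalIntegral.integral_of_le hT.le, intervalIntegral.integral_of_le hT.le]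
      refine MeasureTheory.setIntegral_mono_on ?_ ?_ measurableSet_Ioc ?_
      · exact hf_int.1
      · exact hg_int.1
      · exact fun η hη => hbound η hη.1
    have h2 : (∫ η in (0:ℝ)..T, η ^ (σ - 1)) = T ^ σ / σ := by
      rw [integral_rpow (Or.inl (by linarith))]
      rw [show σ - 1 + 1 = σ by ring, Real.zero_rpow hσ.ne']
      ring
    linarith
  -- combine
  have hstep : k * R ^ (2 * s - (n : ℝ)) *
      (∫ η in (0:ℝ)..T, η ^ (s - 1) / (η + 1) ^ ((n : ℝ) / 2))
      ≤ k * R ^ (2 * s - (n : ℝ)) * (T ^ σ / σ) := by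
    have hkR : (0:ℝ) ≤ k * R ^ (2 * s - (n : ℝ)) := by positivity
    exact mul_le_mul_of_nonneg_left hI hkR
  refine le_trans hstep ?_
  -- now pure algebra with rpow
  have hr4 : (1 - ‖x‖ ^ 2) * (1 - ‖y‖ ^ 2) ≤ 4 * ((1 - ‖x‖) * (1 - ‖y‖)) := by
    have h4 : (1 + ‖x‖) * (1 + ‖y‖) ≤ 4 := by nlinarith
    nlinarith [mul_nonneg (mul_nonneg hdx.le hdy.le) (sub_nonneg.2 h4)]
  have hTσ : T ^ σ ≤ 4 ^ σ * (1 - ‖x‖) ^ σ * (1 - ‖y‖) ^ σ / (R ^ 2) ^ σ := by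
    have h1 : T ^ σ ≤ (4 * ((1 - ‖x‖) * (1 - ‖y‖)) / R ^ 2) ^ σ := by
      apply Real.rpow_le_rpow hT.le _ hσ.le
      exact div_le_div_of_nonneg_right hr4 (by positivity)
    calc T ^ σ ≤ (4 * ((1 - ‖x‖) * (1 - ‖y‖)) / R ^ 2) ^ σ := h1
      _ = 4 ^ σ * (1 - ‖x‖) ^ σ * (1 - ‖y‖) ^ σ / (R ^ 2) ^ σ := by
          rw [Real.div_rpow (by positivity) (by positivity),
            Real.mul_rpow (by norm_num) (by positivity),
            Real.mul_rpow hdx.le hdy.le]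
          ring
  have hRsq : ((R : ℝ) ^ 2) ^ σ = R ^ (2 * σ) := by
    rw [← Real.rpow_natCast R 2, ← Real.rpow_mul hR.le]
    norm_num
  have hRcomb : R ^ (2 * s - (n : ℝ)) / R ^ (2 * σ) = (R ^ ((n : ℝ) - ε))⁻¹ := by
    rw [← Real.rpow_sub hR, ← Real.rpow_neg hR.le]
    congr 1
    simp only [hσdef]; ring
  calc k * R ^ (2 * s - (n : ℝ)) * (T ^ σ / σ)
      ≤ k * R ^ (2 * s - (n : ℝ)) *
        ((4 ^ σ * (1 - ‖x‖) ^ σ * (1 - ‖y‖) ^ σ / (R ^ 2) ^ σ) / σ) := by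
        apply mul_le_mul_of_nonneg_left _ (by positivity)
        gcongr
    _ = k / σ * 4 ^ σ * (1 - ‖x‖) ^ σ * (1 - ‖y‖) ^ σ / R ^ ((n : ℝ) - ε) := by
        rw [hRsq]
        rw [div_eq_mul_inv (k / σ * 4 ^ σ * (1 - ‖x‖) ^ σ * (1 - ‖y‖) ^ σ), ← hRcomb]
        field_simp
end

section
/- Let 0 < r < R < 1, s > 0, and let G_s be the Green function of the unit ball for (-Δ)^s. Then for all x ∈ B₁ \ B_R and y ∈ B_r, G_s(x,y) ≤ C (1-|x|)^s, where C > 0 depends only on n, s, r, R. -/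
/-- For `0 < r < R < 1` and `s > 0`, the Green function of the unit ball for `(-Δ)^s`
satisfies `G_s(x,y) ≤ C (1-|x|)^s` for `x ∈ B₁ ∖ B_R` and `y ∈ B_r`. -/
theorem stmt9 (n : ℕ) (hn : 1 ≤ n) (s r R : ℝ) (hs : 0 < s)
    (h0r : 0 < r) (hrR : r < R) (hR1 : R < 1) :
    ∃ C : ℝ, 0 < C ∧ ∀ x y : EuclideanSpace ℝ (Fin n),
      R ≤ ‖x‖ → ‖x‖ < 1 → ‖y‖ < r →
      (Real.Gamma ((n : ℝ) / 2) / (Real.pi ^ ((n : ℝ) / 2) * 4 ^ s * Real.Gamma s ^ 2)) *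
          ‖x - y‖ ^ (2 * s - (n : ℝ)) *
          ∫ η in (0:ℝ)..((1 - ‖x‖ ^ 2) * (1 - ‖y‖ ^ 2) / ‖x - y‖ ^ 2),
            η ^ (s - 1) / (η + 1) ^ ((n : ℝ) / 2)
        ≤ C * (1 - ‖x‖) ^ s := by
  set k : ℝ := Real.Gamma ((n : ℝ) / 2) / (Real.pi ^ ((n : ℝ) / 2) * 4 ^ s * Real.Gamma s ^ 2) with hk_def
  have hn2 : (0:ℝ) < (n:ℝ)/2 := by
    have : (1:ℝ) ≤ n := by exact_mod_cast hn
    linarith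
  have hk : 0 < k := by
    apply div_pos (Real.Gamma_pos_of_pos hn2)
    have h1 : (0:ℝ) < Real.pi ^ ((n:ℝ)/2) := Real.rpow_pos_of_pos Real.pi_pos _
    have h2 : (0:ℝ) < (4:ℝ) ^ s := Real.rpow_pos_of_pos (by norm_num) _
    have h3 : (0:ℝ) < Real.Gamma s ^ 2 := pow_pos (Real.Gamma_pos_of_pos hs) 2
    positivity
  have hRr : (0:ℝ) < R - r := by linarith
  set M : ℝ := max ((R - r) ^ (2 * s - (n:ℝ))) ((2:ℝ) ^ (2 * s - (n:ℝ))) with hM_def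
  have hM : 0 < M := lt_max_iff.2 (Or.inl (Real.rpow_pos_of_pos hRr _))
  refine ⟨k * M * (2 / (R - r) ^ 2) ^ s / s, by positivity, fun x y hxR hx1 hyr => ?_⟩
  have hy1 : ‖y‖ < 1 := by linarith
  have hxy : R - r ≤ ‖x - y‖ := by
    have h := norm_sub_norm_le x y
    linarith
  have hxy0 : (0:ℝ) < ‖x - y‖ := lt_of_lt_of_le hRr hxy
  have hxy2 : ‖x - y‖ ≤ 2 := by
    have h := norm_sub_le x y
    linarith [norm_nonneg x, norm_nonneg y]
  -- bound on the power of the distance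
  have hA : ‖x - y‖ ^ (2 * s - (n:ℝ)) ≤ M := by
    rcases le_or_gt 0 (2 * s - (n:ℝ)) with h | h
    · exact le_max_of_le_right (Real.rpow_le_rpow hxy0.le hxy2 h)
    · exact le_max_of_le_left (Real.rpow_le_rpow_of_nonpos hRr hxy h.le)
  have hA0 : (0:ℝ) ≤ ‖x - y‖ ^ (2 * s - (n:ℝ)) := Real.rpow_nonneg (norm_nonneg _) _
  set r0 : ℝ := (1 - ‖x‖ ^ 2) * (1 - ‖y‖ ^ 2) / ‖x - y‖ ^ 2 with hr0_def
  have hr00 : 0 ≤ r0 := by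
    apply div_nonneg _ (by positivity)
    apply mul_nonneg <;> nlinarith [norm_nonneg x, norm_nonneg y]
  have hr0le : r0 ≤ 2 / (R - r) ^ 2 * (1 - ‖x‖) := by
    rw [hr0_def, div_mul_eq_mul_div]
    have ha : (0:ℝ) ≤ 1 - ‖x‖ ^ 2 := by nlinarith [norm_nonneg x]
    apply div_le_div₀ (by nlinarith)
      (by nlinarith [mul_nonneg ha (sq_nonneg ‖y‖)]) (by positivity)
    exact pow_le_pow_left₀ hRr.le hxy 2
  -- the integral bound
  have hgint : IntervalIntegrable (fun η : ℝ => η ^ (s - 1)) MeasureTheory.volume 0 r0 :=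
    intervalIntegral.intervalIntegrable_rpow' (by linarith)
  have hfint : IntervalIntegrable (fun η : ℝ => η ^ (s - 1) / (η + 1) ^ ((n:ℝ)/2))
      MeasureTheory.volume 0 r0 := by
    apply hgint.mono_fun
    · exact (by fun_prop : Measurable
        (fun η : ℝ => η ^ (s - 1) / (η + 1) ^ ((n:ℝ)/2))).aestronglyMeasurable
    · filter_upwards [MeasureTheory.ae_restrict_mem measurableSet_uIoc] with η hη
      rw [Set.uIoc_of_le hr00] at hη
      have hη0 : (0:ℝ) ≤ η := hη.1.le
      have h1 : (1:ℝ) ≤ (η + 1) ^ ((n:ℝ)/2) := by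
        calc (1:ℝ) = (1:ℝ) ^ ((n:ℝ)/2) := (Real.one_rpow _).symm
          _ ≤ (η + 1) ^ ((n:ℝ)/2) := Real.rpow_le_rpow zero_le_one (by linarith) hn2.le
      rw [Real.norm_eq_abs, Real.norm_eq_abs, abs_of_nonneg (Real.rpow_nonneg hη0 _),
        abs_of_nonneg (div_nonneg (Real.rpow_nonneg hη0 _) (by positivity))]
      exact div_le_self (Real.rpow_nonneg hη0 _) h1
  have hIle : (∫ η in (0:ℝ)..r0, η ^ (s - 1) / (η + 1) ^ ((n:ℝ)/2)) ≤ r0 ^ s / s := by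
    have hval : (∫ η in (0:ℝ)..r0, η ^ (s - 1)) = r0 ^ s / s := by
      rw [integral_rpow (Or.inl (by linarith : (-1:ℝ) < s - 1))]
      rw [sub_add_cancel, Real.zero_rpow hs.ne', sub_zero]
    calc (∫ η in (0:ℝ)..r0, η ^ (s - 1) / (η + 1) ^ ((n:ℝ)/2))
        ≤ ∫ η in (0:ℝ)..r0, η ^ (s - 1) := by
          apply intervalIntegral.integral_mono_on hr00 hfint hgint
          intro η hη
          have hη0 : (0:ℝ) ≤ η := hη.1
          have h1 : (1:ℝ) ≤ (η + 1) ^ ((n:ℝ)/2) := by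
            calc (1:ℝ) = (1:ℝ) ^ ((n:ℝ)/2) := (Real.one_rpow _).symm
              _ ≤ (η + 1) ^ ((n:ℝ)/2) := Real.rpow_le_rpow zero_le_one (by linarith) hn2.le
          exact div_le_self (Real.rpow_nonneg hη0 _) h1
      _ = r0 ^ s / s := hval
  have hI0 : (0:ℝ) ≤ ∫ η in (0:ℝ)..r0, η ^ (s - 1) / (η + 1) ^ ((n:ℝ)/2) := by
    apply intervalIntegral.integral_nonneg hr00
    intro η hη
    exact div_nonneg (Real.rpow_nonneg hη.1 _) (Real.rpow_nonneg (by linarith [hη.1]) _)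
  have hr0s : r0 ^ s ≤ (2 / (R - r) ^ 2) ^ s * (1 - ‖x‖) ^ s := by
    rw [← Real.mul_rpow (by positivity) (by linarith)]
    exact Real.rpow_le_rpow hr00 hr0le hs.le
  have hIle2 : (∫ η in (0:ℝ)..r0, η ^ (s - 1) / (η + 1) ^ ((n:ℝ)/2))
      ≤ (2 / (R - r) ^ 2) ^ s * (1 - ‖x‖) ^ s / s :=
    le_trans hIle ((div_le_div_iff_of_pos_right hs).2 hr0s)
  calc k * ‖x - y‖ ^ (2 * s - (n:ℝ)) * ∫ η in (0:ℝ)..r0, η ^ (s - 1) / (η + 1) ^ ((n:ℝ)/2)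
      ≤ k * M * ((2 / (R - r) ^ 2) ^ s * (1 - ‖x‖) ^ s / s) := by
        apply mul_le_mul _ hIle2 hI0 (by positivity)
        exact mul_le_mul_of_nonneg_left hA hk.le
    _ = k * M * (2 / (R - r) ^ 2) ^ s / s * (1 - ‖x‖) ^ s := by ring
end

section
/- Let s > 0 and let ψ : ℝ → ℝ satisfy ψ(1+ε) = κ ε^s + o(ε^s) as ε → 0⁺ for some κ ≠ 0, together with the uniform bound ε^{-s}|ψ(1+εt)| ≤ C t^s for all t > 0 and small ε > 0. Then for every ℓ ∈ ℕ, the rescaled derivatives ε^{ℓ-s} ∂^ℓ ψ(1+εt) converge, in the sense of distributions on (0,∞), to κ s(s-1)···(s-ℓ+1) t^{s-ℓ}. -/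
open Filter Asymptotics MeasureTheory
open scoped ContDiff

/-- Integration by parts on `(0,∞)` against a compactly supported test function. -/
private lemma aux_ibp_step (u u' v : ℝ → ℝ) (a b : ℝ) (ha : 0 < a) (hab : a ≤ b)
    (hu : ∀ t ∈ Set.Ioi (0:ℝ), HasDerivAt u (u' t) t)
    (hucont : ContinuousOn u (Set.Ioi 0)) (hu'cont : ContinuousOn u' (Set.Ioi 0))
    (hv : ContDiff ℝ ∞ v) (hsupp : tsupport v ⊆ Set.Icc a b) :
    ∫ t in Set.Ioi (0:ℝ), u' t * v t = - ∫ t in Set.Ioi (0:ℝ), u t * deriv v t := by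
  set c := a / 2 with hc
  set d := b + 1 with hd
  have hc0 : 0 < c := by positivity
  have hca : c < a := by rw [hc]; linarith
  have hbd : b < d := by rw [hd]; linarith
  have hcd : c ≤ d := by linarith
  have hIcc : Set.Icc c d ⊆ Set.Ioi (0:ℝ) := fun x hx => lt_of_lt_of_le hc0 hx.1
  have hvz : ∀ x, x ∉ Set.Icc a b → v x = 0 := fun x hx =>
    Function.notMem_support.mp (fun h => hx (hsupp (subset_closure h)))
  have hdvz : ∀ x, x ∉ Set.Icc a b → deriv v x = 0 := fun x hx =>
    Function.notMem_support.mp (fun h => hx (hsupp (support_deriv_subset h)))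
  have hvcont : Continuous v := hv.continuous
  have hdvcont : Continuous (deriv v) := hv.continuous_deriv (by norm_num)
  have huIcc : Set.uIcc c d = Set.Icc c d := Set.uIcc_of_le hcd
  have hIccSub : Set.Icc a b ⊆ Set.Ioc c d := fun x hx => ⟨lt_of_lt_of_le hca hx.1, hx.2.trans hbd.le⟩
  -- interval integration by parts
  have hu1 : ∀ x ∈ Set.uIcc c d, HasDerivAt u (u' x) x := by
    rw [huIcc]; intro x hx; exact hu x (hIcc hx)
  have hv1 : ∀ x ∈ Set.uIcc c d, HasDerivAt v (deriv v x) x := fun x _ =>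
    (hv.differentiable (by norm_num) x).hasDerivAt
  have hu'int : IntervalIntegrable u' volume c d := by
    apply ContinuousOn.intervalIntegrable; rw [huIcc]; exact hu'cont.mono hIcc
  have hdvint : IntervalIntegrable (deriv v) volume c d := hdvcont.intervalIntegrable c d
  have hibp := intervalIntegral.integral_deriv_mul_eq_sub hu1 hv1 hu'int hdvint
  have hvc : v c = 0 := hvz c (fun h => absurd h.1 (not_le.mpr hca))
  have hvd : v d = 0 := hvz d (fun h => absurd h.2 (not_le.mpr hbd))
  rw [hvc, hvd, mul_zero, mul_zero, sub_zero] at hibp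
  have hint1 : IntervalIntegrable (fun x => u' x * v x) volume c d := by
    apply ContinuousOn.intervalIntegrable; rw [huIcc]
    exact (hu'cont.mono hIcc).mul hvcont.continuousOn
  have hint2 : IntervalIntegrable (fun x => u x * deriv v x) volume c d := by
    apply ContinuousOn.intervalIntegrable; rw [huIcc]
    exact (hucont.mono hIcc).mul hdvcont.continuousOn
  rw [intervalIntegral.integral_add hint1 hint2] at hibp
  -- convert set integrals to interval integrals
  have conv : ∀ f : ℝ → ℝ, (∀ x, x ∉ Set.Icc a b → f x = 0) →
      ∫ t in Set.Ioi (0:ℝ), f t = ∫ x in c..d, f x := by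
    intro f hf
    have h1 : ∀ x, x ∉ Set.Ioi (0:ℝ) → f x = 0 := fun x hx =>
      hf x (fun hx' => hx (lt_of_lt_of_le ha hx'.1))
    have h2 : Function.support f ⊆ Set.Ioc c d := fun x hx => by
      by_contra hmem
      by_cases hab' : x ∈ Set.Icc a b
      · exact hmem (hIccSub hab')
      · exact hx (hf x hab')
    rw [MeasureTheory.setIntegral_eq_integral_of_forall_compl_eq_zero h1,
      ← intervalIntegral.integral_eq_integral_of_support_subset h2]
  rw [conv (fun t => u' t * v t) (fun x hx => by simp [hvz x hx]),
    conv (fun t => u t * deriv v t) (fun x hx => by simp [hdvz x hx])]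
  linarith [hibp]

private lemma aux_tsupport_deriv {v : ℝ → ℝ} {s : Set ℝ} (h : tsupport v ⊆ s)
    (hs : IsClosed s) : tsupport (deriv v) ⊆ s :=
  (closure_minimal (fun x hx => h (support_deriv_subset hx)) hs)

/-- Repeated integration by parts for `t ^ r` against iterated derivatives. -/
private lemma aux_poly_ibp (a b : ℝ) (ha : 0 < a) (hab : a ≤ b) :
    ∀ (n : ℕ) (r : ℝ) (v : ℝ → ℝ), ContDiff ℝ ∞ v → tsupport v ⊆ Set.Icc a b →
    ∫ t in Set.Ioi (0:ℝ), t ^ r * iteratedDeriv n v t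
      = (-1:ℝ)^n * (∏ j ∈ Finset.range n, (r - j)) * ∫ t in Set.Ioi (0:ℝ), t ^ (r - n) * v t := by
  intro n
  induction n with
  | zero => intro r v hv hsupp; simp
  | succ n ih =>
    intro r v hv hsupp
    have hv' : ContDiff ℝ ∞ (deriv v) := (contDiff_infty_iff_deriv.mp hv).2
    have hsupp' : tsupport (deriv v) ⊆ Set.Icc a b := aux_tsupport_deriv hsupp isClosed_Icc
    rw [iteratedDeriv_succ', ih r (deriv v) hv' hsupp']
    have hcontpow : ∀ p : ℝ, ContinuousOn (fun t : ℝ => t ^ p) (Set.Ioi 0) := by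
      intro p
      exact continuousOn_id.rpow_const (fun x hx => Or.inl (ne_of_gt hx))
    have key := aux_ibp_step (fun t => t ^ (r - n)) (fun t => (r - n) * t ^ (r - n - 1)) v
      a b ha hab
      (fun t ht => by
        simpa using Real.hasDerivAt_rpow_const (x := t) (p := r - n) (Or.inl (ne_of_gt ht)))
      (hcontpow _) (continuousOn_const.mul (hcontpow _)) hv hsupp
    -- key : ∫ (r-n) * t^{r-n-1} * v = - ∫ t^{r-n} * deriv v
    have key2 : ∫ t in Set.Ioi (0:ℝ), t ^ (r - ↑n) * deriv v t
        = -((r - n) * ∫ t in Set.Ioi (0:ℝ), t ^ (r - n - 1) * v t) := by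
      have : ∫ t in Set.Ioi (0:ℝ), (r - ↑n) * t ^ (r - ↑n - 1) * v t
          = (r - ↑n) * ∫ t in Set.Ioi (0:ℝ), t ^ (r - ↑n - 1) * v t := by
        simp_rw [mul_assoc]
        exact MeasureTheory.integral_const_mul _ _
      rw [this] at key
      linarith [key]
    rw [key2]
    have hexp : r - ↑n - 1 = r - ↑(n + 1) := by push_cast; ring
    rw [hexp, Finset.prod_range_succ]
    push_cast
    ring

/-- Repeated integration by parts for `∂^n ψ (1 + ε t)`. -/
private lemma aux_psi_ibp (ψ : ℝ → ℝ)
    (hn : ∀ m, ContDiffOn ℝ ∞ (iteratedDeriv m ψ) (Set.Ioi 1))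
    (ε : ℝ) (hε : 0 < ε) (a b : ℝ) (ha : 0 < a) (hab : a ≤ b) :
    ∀ (n : ℕ) (v : ℝ → ℝ), ContDiff ℝ ∞ v → tsupport v ⊆ Set.Icc a b →
    ∫ t in Set.Ioi (0:ℝ), iteratedDeriv n ψ (1 + ε * t) * v t
      = (-ε⁻¹)^n * ∫ t in Set.Ioi (0:ℝ), ψ (1 + ε * t) * iteratedDeriv n v t := by
  have hmaps : ∀ t ∈ Set.Ioi (0:ℝ), (1:ℝ) + ε * t ∈ Set.Ioi (1:ℝ) := by
    intro t ht
    simp only [Set.mem_Ioi] at *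
    nlinarith
  have hcont : ∀ m, ContinuousOn (fun t => iteratedDeriv m ψ (1 + ε * t)) (Set.Ioi 0) := by
    intro m
    exact ContinuousOn.comp (hn m).continuousOn
      ((continuous_const.add (continuous_const.mul continuous_id)).continuousOn) hmaps
  intro n
  induction n with
  | zero => intro v hv hsupp; simp
  | succ n ih =>
    intro v hv hsupp
    have hv' : ContDiff ℝ ∞ (deriv v) := (contDiff_infty_iff_deriv.mp hv).2
    have hsupp' : tsupport (deriv v) ⊆ Set.Icc a b := aux_tsupport_deriv hsupp isClosed_Icc
    have hder : ∀ t ∈ Set.Ioi (0:ℝ),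
        HasDerivAt (fun t => iteratedDeriv n ψ (1 + ε * t))
          (ε * iteratedDeriv (n+1) ψ (1 + ε * t)) t := by
      intro t ht
      have h1 : HasDerivAt (fun t : ℝ => 1 + ε * t) ε t := by
        simpa using ((hasDerivAt_id t).const_mul ε).const_add 1
      have hca : ContDiffAt ℝ ∞ (iteratedDeriv n ψ) (1 + ε * t) :=
        (hn n).contDiffAt (isOpen_Ioi.mem_nhds (hmaps t ht))
      have h2 : HasDerivAt (iteratedDeriv n ψ) (iteratedDeriv (n+1) ψ (1 + ε * t)) (1 + ε * t) := by
        have := (hca.differentiableAt (by norm_num)).hasDerivAt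
        rwa [← iteratedDeriv_succ] at this
      have h3 := h2.comp t h1
      rw [show iteratedDeriv (n+1) ψ (1 + ε * t) * ε = ε * iteratedDeriv (n+1) ψ (1 + ε * t) from mul_comm _ _] at h3
      exact h3
    have step := aux_ibp_step (fun t => iteratedDeriv n ψ (1 + ε * t))
      (fun t => ε * iteratedDeriv (n+1) ψ (1 + ε * t)) v a b ha hab hder (hcont n)
      (continuousOn_const.mul (hcont (n+1))) hv hsupp
    have hpull : ∫ t in Set.Ioi (0:ℝ), ε * iteratedDeriv (n+1) ψ (1 + ε * t) * v t
        = ε * ∫ t in Set.Ioi (0:ℝ), iteratedDeriv (n+1) ψ (1 + ε * t) * v t := by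
      simp_rw [mul_assoc]
      exact MeasureTheory.integral_const_mul _ _
    rw [hpull] at step
    have hmain : ∫ t in Set.Ioi (0:ℝ), iteratedDeriv (n+1) ψ (1 + ε * t) * v t
        = -ε⁻¹ * ∫ t in Set.Ioi (0:ℝ), iteratedDeriv n ψ (1 + ε * t) * deriv v t := by
      field_simp
      linarith [step]
    rw [hmain, ih (deriv v) hv' hsupp', ← iteratedDeriv_succ']
    ring

/-- If `ψ(1+ε) = κ ε^s + o(ε^s)` as `ε → 0⁺` with `κ ≠ 0`, together with the uniform
bound `ε^{-s}|ψ(1+εt)| ≤ C t^s`, then `ε^{ℓ-s} ∂^ℓψ(1+εt) → κ s(s-1)⋯(s-ℓ+1) t^{s-ℓ}`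
in the sense of distributions on `(0, ∞)`. -/
theorem stmt14 (s : ℝ) (hs : 0 < s) (κ : ℝ) (hκ : κ ≠ 0)
    (ψ : ℝ → ℝ) (hψ : ContDiffOn ℝ (⊤ : ℕ∞) ψ (Set.Ioi 1))
    (hasymp : (fun ε => ψ (1 + ε) - κ * ε ^ s) =o[nhdsWithin 0 (Set.Ioi 0)]
      fun ε : ℝ => ε ^ s)
    (C ε₀ : ℝ) (hε₀ : 0 < ε₀)
    (hbound : ∀ t : ℝ, 0 < t → ∀ ε : ℝ, 0 < ε → ε < ε₀ →
      ε ^ (-s) * |ψ (1 + ε * t)| ≤ C * t ^ s)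
    (ℓ : ℕ) :
    ∀ φ : ℝ → ℝ, ContDiff ℝ (⊤ : ℕ∞) φ → HasCompactSupport φ → tsupport φ ⊆ Set.Ioi 0 →
      Tendsto
        (fun ε : ℝ => ∫ t in Set.Ioi (0:ℝ),
          ε ^ ((ℓ : ℝ) - s) * iteratedDeriv ℓ ψ (1 + ε * t) * φ t)
        (nhdsWithin 0 (Set.Ioi 0))
        (nhds (κ * (∏ j ∈ Finset.range ℓ, (s - j)) *
          ∫ t in Set.Ioi (0:ℝ), t ^ (s - (ℓ : ℝ)) * φ t)) := by
  intro φ hφ hcs hsupp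
  by_cases h0 : tsupport φ = ∅
  · have hφ0 : φ = 0 := tsupport_eq_empty_iff.mp h0
    simpa [hφ0] using (tendsto_const_nhds :
      Tendsto (fun _ : ℝ => (0:ℝ)) (nhdsWithin 0 (Set.Ioi 0)) (nhds 0))
  -- setup: bounds on the support
  have hK : IsCompact (tsupport φ) := hcs
  have hts : (tsupport φ).Nonempty := Set.nonempty_iff_ne_empty.mpr h0
  set a := sInf (tsupport φ) with ha_def
  set b := sSup (tsupport φ) with hb_def
  have haK : a ∈ tsupport φ := hK.sInf_mem hts
  have hbK : b ∈ tsupport φ := hK.sSup_mem hts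
  have ha : 0 < a := hsupp haK
  have hab : a ≤ b := csInf_le_csSup hts hK.bddBelow hK.bddAbove
  have hsub : tsupport φ ⊆ Set.Icc a b := fun x hx =>
    ⟨csInf_le hK.bddBelow hx, le_csSup hK.bddAbove hx⟩
  -- smoothness bookkeeping
  have hphi : ContDiff ℝ ∞ φ := hφ.of_le (by simp)
  have hn : ∀ m, ContDiffOn ℝ ∞ (iteratedDeriv m ψ) (Set.Ioi 1) := by
    intro m
    induction m with
    | zero => simpa using hψ.of_le (by simp)
    | succ m ih =>
      rw [iteratedDeriv_succ]
      exact ih.deriv_of_isOpen isOpen_Ioi (by simp)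
  have hDcont : Continuous (iteratedDeriv ℓ φ) := hφ.continuous_iteratedDeriv ℓ (by exact_mod_cast le_top)
  have hDsupp : tsupport (iteratedDeriv ℓ φ) ⊆ Set.Icc a b := by
    have : ∀ k, tsupport (iteratedDeriv k φ) ⊆ Set.Icc a b := by
      intro k
      induction k with
      | zero => simpa using hsub
      | succ k ih =>
        rw [iteratedDeriv_succ]
        exact aux_tsupport_deriv ih isClosed_Icc
    exact this ℓ
  have hmaps : ∀ ε > (0:ℝ), ∀ t ∈ Set.Ioi (0:ℝ), (1:ℝ) + ε * t ∈ Set.Ioi (1:ℝ) := by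
    intro ε hε t ht
    simp only [Set.mem_Ioi] at *
    nlinarith
  -- the rescaled functions after integration by parts
  set G : ℝ → ℝ → ℝ := fun ε t => ε ^ (-s) * ψ (1 + ε * t) * iteratedDeriv ℓ φ t with hG_def
  -- Step A: integration by parts identity
  have hA : ∀ ε ∈ Set.Ioi (0:ℝ),
      (∫ t in Set.Ioi (0:ℝ), ε ^ ((ℓ : ℝ) - s) * iteratedDeriv ℓ ψ (1 + ε * t) * φ t)
        = (-1:ℝ)^ℓ * ∫ t in Set.Ioi (0:ℝ), G ε t := by
    intro ε hε
    have hε' : (0:ℝ) < ε := hε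
    have e1 : ∫ t in Set.Ioi (0:ℝ), ε ^ ((ℓ : ℝ) - s) * iteratedDeriv ℓ ψ (1 + ε * t) * φ t
        = ε ^ ((ℓ : ℝ) - s) * ∫ t in Set.Ioi (0:ℝ), iteratedDeriv ℓ ψ (1 + ε * t) * φ t := by
      simp_rw [mul_assoc]
      exact MeasureTheory.integral_const_mul _ _
    have e2 : ∫ t in Set.Ioi (0:ℝ), G ε t
        = ε ^ (-s) * ∫ t in Set.Ioi (0:ℝ), ψ (1 + ε * t) * iteratedDeriv ℓ φ t := by
      simp_rw [hG_def, mul_assoc]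
      exact MeasureTheory.integral_const_mul _ _
    rw [e1, aux_psi_ibp ψ hn ε hε' a b ha hab ℓ φ hphi hsub, e2]
    have hsc : ε ^ ((ℓ:ℝ) - s) * (-ε⁻¹)^ℓ = (-1:ℝ)^ℓ * ε ^ (-s) := by
      have h1 : ((-ε⁻¹)^ℓ : ℝ) = (-1:ℝ)^ℓ * ε ^ (-(ℓ:ℝ)) := by
        rw [neg_pow, inv_pow, ← Real.rpow_natCast ε ℓ, ← Real.rpow_neg hε'.le]
      rw [h1, show ε ^ ((ℓ:ℝ) - s) * ((-1:ℝ)^ℓ * ε ^ (-(ℓ:ℝ)))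
        = (-1:ℝ)^ℓ * (ε ^ ((ℓ:ℝ) - s) * ε ^ (-(ℓ:ℝ))) from by ring,
        ← Real.rpow_add hε', show (ℓ:ℝ) - s + -(ℓ:ℝ) = -s from by ring]
    calc ε ^ ((ℓ:ℝ) - s) * ((-ε⁻¹)^ℓ * ∫ t in Set.Ioi (0:ℝ),
            ψ (1 + ε * t) * iteratedDeriv ℓ φ t)
        = (ε ^ ((ℓ:ℝ) - s) * (-ε⁻¹)^ℓ) * ∫ t in Set.Ioi (0:ℝ),
            ψ (1 + ε * t) * iteratedDeriv ℓ φ t := by ring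
      _ = (-1:ℝ)^ℓ * (ε ^ (-s) * ∫ t in Set.Ioi (0:ℝ),
            ψ (1 + ε * t) * iteratedDeriv ℓ φ t) := by rw [hsc]; ring
  -- Step B: dominated convergence
  have hB : Tendsto (fun ε => ∫ t in Set.Ioi (0:ℝ), G ε t) (nhdsWithin 0 (Set.Ioi 0))
      (nhds (∫ t in Set.Ioi (0:ℝ), κ * t ^ s * iteratedDeriv ℓ φ t)) := by
    apply MeasureTheory.tendsto_integral_filter_of_dominated_convergence
      (bound := fun t => C * t ^ s * |iteratedDeriv ℓ φ t|)
    · -- measurability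
      filter_upwards [self_mem_nhdsWithin] with ε hε
      have hε' : (0:ℝ) < ε := hε
      have : ContinuousOn (G ε) (Set.Ioi 0) := by
        apply ContinuousOn.mul _ hDcont.continuousOn
        apply ContinuousOn.mul continuousOn_const
        exact ContinuousOn.comp hψ.continuousOn
          ((continuous_const.add (continuous_const.mul continuous_id)).continuousOn)
          (hmaps ε hε')
      exact this.aestronglyMeasurable measurableSet_Ioi
    · -- bound
      filter_upwards [Ioo_mem_nhdsGT hε₀] with ε hε
      rw [MeasureTheory.ae_restrict_iff' measurableSet_Ioi]
      filter_upwards with t ht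
      have ht' : (0:ℝ) < t := ht
      have hb := hbound t ht' ε hε.1 hε.2
      have : ‖G ε t‖ = (ε ^ (-s) * |ψ (1 + ε * t)|) * |iteratedDeriv ℓ φ t| := by
        rw [hG_def]
        simp only [Real.norm_eq_abs, abs_mul]
        rw [abs_of_nonneg (Real.rpow_nonneg hε.1.le _)]
      rw [this]
      exact mul_le_mul_of_nonneg_right hb (abs_nonneg _)
    · -- bound integrable
      have hbsupp : Function.support (fun t => C * t ^ s * |iteratedDeriv ℓ φ t|)
          ⊆ Set.Icc a b := by
        intro x hx
        by_contra hmem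
        have : iteratedDeriv ℓ φ x = 0 :=
          Function.notMem_support.mp (fun h => hmem (hDsupp (subset_closure h)))
        simp [this] at hx
      have hint : Integrable (fun t => C * t ^ s * |iteratedDeriv ℓ φ t|) := by
        rw [← MeasureTheory.integrableOn_iff_integrable_of_support_subset hbsupp]
        apply ContinuousOn.integrableOn_Icc
        apply ContinuousOn.mul _ hDcont.abs.continuousOn
        apply ContinuousOn.mul continuousOn_const
        exact continuousOn_id.rpow_const
          (fun x hx => Or.inl (ne_of_gt (lt_of_lt_of_le ha hx.1)))
      exact (MeasureTheory.integrableOn_iff_integrable_of_support_subset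
        (hbsupp.trans (fun x hx => lt_of_lt_of_le ha hx.1))).mpr hint
    · -- pointwise limit
      rw [MeasureTheory.ae_restrict_iff' measurableSet_Ioi]
      filter_upwards with t htmem
      have ht : (0:ℝ) < t := htmem
      -- the basic scalar limit
      have hpsilim : Tendsto (fun δ => ψ (1 + δ) / δ ^ s) (nhdsWithin 0 (Set.Ioi 0))
          (nhds κ) := by
        have h := hasymp.tendsto_div_nhds_zero
        have h2 := h.add (tendsto_const_nhds (x := κ))
        rw [zero_add] at h2
        apply h2.congr'
        filter_upwards [self_mem_nhdsWithin] with δ hδ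
        have hδ' : (0:ℝ) < δ := hδ
        have hδs : (δ:ℝ) ^ s ≠ 0 := ne_of_gt (Real.rpow_pos_of_pos hδ' s)
        field_simp
        ring
      have hεt : Tendsto (fun ε : ℝ => ε * t) (nhdsWithin 0 (Set.Ioi 0))
          (nhdsWithin 0 (Set.Ioi 0)) := by
        apply tendsto_nhdsWithin_of_tendsto_nhds_of_eventually_within
        · have : Tendsto (fun ε : ℝ => ε * t) (nhds 0) (nhds (0 * t)) :=
            (continuous_id.mul continuous_const).tendsto 0
          rw [zero_mul] at this
          exact this.mono_left nhdsWithin_le_nhds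
        · filter_upwards [self_mem_nhdsWithin] with ε hε
          exact mul_pos hε ht
      have hcomp := hpsilim.comp hεt
      have hlim2 : Tendsto (fun ε : ℝ => t ^ s * (ψ (1 + ε * t) / (ε * t) ^ s)
          * iteratedDeriv ℓ φ t) (nhdsWithin 0 (Set.Ioi 0))
          (nhds (t ^ s * κ * iteratedDeriv ℓ φ t)) :=
        (hcomp.const_mul (t ^ s)).mul_const (iteratedDeriv ℓ φ t)
      have heq : (fun ε : ℝ => t ^ s * (ψ (1 + ε * t) / (ε * t) ^ s)
            * iteratedDeriv ℓ φ t)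
          =ᶠ[nhdsWithin 0 (Set.Ioi 0)] (fun ε => G ε t) := by
        filter_upwards [self_mem_nhdsWithin] with ε hε
        have hε' : (0:ℝ) < ε := hε
        have h1 : (ε * t) ^ s = ε ^ s * t ^ s := Real.mul_rpow hε'.le ht.le
        have h2 : ε ^ (-s) = (ε ^ s)⁻¹ := Real.rpow_neg hε'.le s
        have hεs : ε ^ s ≠ 0 := ne_of_gt (Real.rpow_pos_of_pos hε' s)
        have hts : t ^ s ≠ 0 := ne_of_gt (Real.rpow_pos_of_pos ht s)
        rw [hG_def]
        simp only
        rw [h1, h2]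
        field_simp
      have := hlim2.congr' heq
      rwa [show t ^ s * κ * iteratedDeriv ℓ φ t = κ * t ^ s * iteratedDeriv ℓ φ t
        from by ring] at this
  -- Step C: value of the limit
  have hC : (-1:ℝ)^ℓ * ∫ t in Set.Ioi (0:ℝ), κ * t ^ s * iteratedDeriv ℓ φ t
      = κ * (∏ j ∈ Finset.range ℓ, (s - j)) *
        ∫ t in Set.Ioi (0:ℝ), t ^ (s - (ℓ : ℝ)) * φ t := by
    have e1 : ∫ t in Set.Ioi (0:ℝ), κ * t ^ s * iteratedDeriv ℓ φ t
        = κ * ∫ t in Set.Ioi (0:ℝ), t ^ s * iteratedDeriv ℓ φ t := by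
      simp_rw [mul_assoc]
      exact MeasureTheory.integral_const_mul _ _
    rw [e1, aux_poly_ibp a b ha hab ℓ s φ hphi hsub]
    have h11 : (-1:ℝ)^ℓ * (-1:ℝ)^ℓ = 1 := by
      rw [← pow_add]
      exact Even.neg_one_pow ⟨ℓ, rfl⟩
    calc (-1:ℝ)^ℓ * (κ * ((-1:ℝ)^ℓ * (∏ j ∈ Finset.range ℓ, (s - j)) *
            ∫ t in Set.Ioi (0:ℝ), t ^ (s - (ℓ:ℝ)) * φ t))
        = ((-1:ℝ)^ℓ * (-1:ℝ)^ℓ) * (κ * (∏ j ∈ Finset.range ℓ, (s - j)) *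
            ∫ t in Set.Ioi (0:ℝ), t ^ (s - (ℓ:ℝ)) * φ t) := by ring
      _ = κ * (∏ j ∈ Finset.range ℓ, (s - j)) *
            ∫ t in Set.Ioi (0:ℝ), t ^ (s - (ℓ:ℝ)) * φ t := by rw [h11, one_mul]
  -- assemble
  have final := hB.const_mul ((-1:ℝ)^ℓ)
  rw [hC] at final
  apply final.congr'
  filter_upwards [self_mem_nhdsWithin] with ε hε
  exact (hA ε hε).symm
end
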